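/- In the lattice L with basis C, F, E_1, ..., E_7 as above, the classes D = C + aF - Σ b_n E_n with a ≥ 0, b_n ∈ {0,1}, satisfying Σ b_n = 2a + 1 and D·C_i ≥ 0 for all eight classes C_1, ..., C_8 (from the previous statement) are exactly the eight classes: C - E_7; C + F - E_1 - E_3 - E_6; C + F - E_1 - E_4 - E_5; C + F - E_2 - E_3 - E_5; C + F - E_2 - E_4 - E_6; C + 2F - E_1 - E_2 - E_3 - E_4 - E_7; C + 2F - E_1 - E_2 - E_5 - E_6 - E_7; C + 2F - E_3 - E_4 - E_5 - E_6 - E_7. Moreover any two distinct classes among these eight have pairwise intersection number 1. -/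

import Mathlib

/-!
Pairing `D = C + aF - Σ bₙEₙ` with a class `C + kF - Σ_{n ∈ S} Eₙ` gives `k + a - Σ_{n ∈ S} bₙ`,
so the conditions `D · Cᵢ ≥ 0` are eight linear inequalities in `(a, b)`. As `bₙ ∈ {0, 1}` and
`Σ bₙ = 2a + 1`, we have `0 ≤ a ≤ 3`, and checking the finitely many `(a, b)` leaves exactly the
eight classes `Dⱼ`. Their pairwise intersection numbers are computed directly.
-/

/-- The geometric Picard lattice of a standard rational conic bundle of degree 1:
the free abelian group with basis `C, F, E₁, …, E₇`, realized as `Fin 9 → ℤ`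
(coordinate 0 for `C`, coordinate 1 for `F`, coordinates 2–8 for `E₁,…,E₇`). -/
abbrev Pic1 := Fin 9 → ℤ

/-- The index in `Fin 9` of the basis vector `E_n`. -/
def eIdx (n : Fin 7) : Fin 9 := ⟨n.1 + 2, by have := n.isLt; omega⟩

/-- The basis class `C`. -/
def Cv : Pic1 := fun i => if i = 0 then 1 else 0

/-- The basis class `F` (the class of a fiber). -/
def Fv : Pic1 := fun i => if i = 1 then 1 else 0

/-- The basis class `E_n`. -/
def Ev (n : Fin 7) : Pic1 := fun i => if i = eIdx n then 1 else 0

/-- The intersection pairing: `C·C = F·F = 0`, `C·F = 1`, `E_i·E_i = -1`, and all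
other products among basis vectors vanish. -/
def B (v w : Pic1) : ℤ :=
  v 0 * w 1 + v 1 * w 0 - ∑ n : Fin 7, v (eIdx n) * w (eIdx n)

/-- The canonical class `K = -2C - 2F + E₁ + ⋯ + E₇`. -/
def Kv : Pic1 := fun i => -2 * Cv i - 2 * Fv i + ∑ n : Fin 7, Ev n i

/-- The eight classes of the case-(2a) configuration:
`C₁ = C - E₁ - E₂`, `C₂ = C - E₃ - E₄`, `C₃ = C - E₅ - E₆`,
`C₄ = C + 2F - E₁ - E₂ - E₃ - E₄ - E₅ - E₆`,
`C₅ = C + F - E₁ - E₃ - E₅ - E₇`, `C₆ = C + F - E₁ - E₄ - E₆ - E₇`,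
`C₇ = C + F - E₂ - E₃ - E₆ - E₇`, `C₈ = C + F - E₂ - E₄ - E₅ - E₇`. -/
def Cs : Fin 8 → Pic1 :=
  ![Cv - Ev 0 - Ev 1,
    Cv - Ev 2 - Ev 3,
    Cv - Ev 4 - Ev 5,
    Cv + Fv + Fv - Ev 0 - Ev 1 - Ev 2 - Ev 3 - Ev 4 - Ev 5,
    Cv + Fv - Ev 0 - Ev 2 - Ev 4 - Ev 6,
    Cv + Fv - Ev 0 - Ev 3 - Ev 5 - Ev 6,
    Cv + Fv - Ev 1 - Ev 2 - Ev 5 - Ev 6,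
    Cv + Fv - Ev 1 - Ev 3 - Ev 4 - Ev 6]

/-- The eight `(-1)`-section classes compatible with the case-(2a) configuration. -/
def Ds : Fin 8 → Pic1 :=
  ![Cv - Ev 6,
    Cv + Fv - Ev 0 - Ev 2 - Ev 5,
    Cv + Fv - Ev 0 - Ev 3 - Ev 4,
    Cv + Fv - Ev 1 - Ev 2 - Ev 4,
    Cv + Fv - Ev 1 - Ev 3 - Ev 5,
    Cv + Fv + Fv - Ev 0 - Ev 1 - Ev 2 - Ev 3 - Ev 6,
    Cv + Fv + Fv - Ev 0 - Ev 1 - Ev 4 - Ev 5 - Ev 6,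
    Cv + Fv + Fv - Ev 2 - Ev 3 - Ev 4 - Ev 5 - Ev 6]

def sectionClass (a : ℤ) (b : Fin 7 → ℤ) : Pic1 :=
  fun i => Cv i + a * Fv i - ∑ n : Fin 7, b n * Ev n i

lemma Pic1.ext_iff {v w : Pic1} :
    v = w ↔ v 0 = w 0 ∧ v 1 = w 1 ∧ ∀ n, v (eIdx n) = w (eIdx n) := by
  refine ⟨by rintro rfl; simp, fun ⟨h0, h1, hE⟩ => funext fun i => ?_⟩
  fin_cases i
  exacts [h0, h1, hE 0, hE 1, hE 2, hE 3, hE 4, hE 5, hE 6]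

lemma eIdx_ne_zero (n : Fin 7) : eIdx n ≠ 0 := Fin.ne_of_val_ne (by simp [eIdx])

lemma eIdx_ne_one (n : Fin 7) : eIdx n ≠ 1 := Fin.ne_of_val_ne (by simp [eIdx])

lemma eIdx_inj {m n : Fin 7} : eIdx m = eIdx n ↔ m = n := by
  simp only [eIdx, Fin.ext_iff]
  omega

@[simp] lemma Cv_zero : Cv 0 = 1 := rfl

@[simp] lemma Cv_one : Cv 1 = 0 := rfl

@[simp] lemma Cv_eIdx (n : Fin 7) : Cv (eIdx n) = 0 := if_neg (eIdx_ne_zero n)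

@[simp] lemma Fv_zero : Fv 0 = 0 := rfl

@[simp] lemma Fv_one : Fv 1 = 1 := rfl

@[simp] lemma Fv_eIdx (n : Fin 7) : Fv (eIdx n) = 0 := if_neg (eIdx_ne_one n)

@[simp] lemma Ev_zero (m : Fin 7) : Ev m 0 = 0 := if_neg (eIdx_ne_zero m).symm

@[simp] lemma Ev_one (m : Fin 7) : Ev m 1 = 0 := if_neg (eIdx_ne_one m).symm

@[simp] lemma Ev_eIdx (m n : Fin 7) : Ev m (eIdx n) = if n = m then 1 else 0 := by
  simp [Ev, eIdx_inj]

section sectionClass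

variable (a : ℤ) (b : Fin 7 → ℤ)

@[simp] lemma sectionClass_zero : sectionClass a b 0 = 1 := by simp [sectionClass]

@[simp] lemma sectionClass_one : sectionClass a b 1 = a := by simp [sectionClass]

@[simp] lemma sectionClass_eIdx (n : Fin 7) : sectionClass a b (eIdx n) = -b n := by
  simp [sectionClass]

lemma B_sectionClass (w : Pic1) :
    B (sectionClass a b) w = w 1 + a * w 0 + ∑ n, b n * w (eIdx n) := by
  simp [B, Finset.sum_neg_distrib]

lemma sectionClass_eq_iff (v : Pic1) :
    sectionClass a b = v ↔ v 0 = 1 ∧ v 1 = a ∧ ∀ n, v (eIdx n) = -b n := by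
  simp [Pic1.ext_iff, eq_comm]

/-- The conditions `D · Cᵢ ≥ 0`, `i = 1, …, 8`, for `D = C + aF - Σ bₙEₙ`. -/
def CsBounds : Prop :=
  b 0 + b 1 ≤ a ∧ b 2 + b 3 ≤ a ∧ b 4 + b 5 ≤ a ∧
    b 0 + b 1 + b 2 + b 3 + b 4 + b 5 ≤ a + 2 ∧
    b 0 + b 2 + b 4 + b 6 ≤ a + 1 ∧ b 0 + b 3 + b 5 + b 6 ≤ a + 1 ∧
    b 1 + b 2 + b 5 + b 6 ≤ a + 1 ∧ b 1 + b 3 + b 4 + b 6 ≤ a + 1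

lemma nonneg_B_Cs_iff : (∀ i, 0 ≤ B (sectionClass a b) (Cs i)) ↔ CsBounds a b := by
  simp [Fin.forall_fin_succ, B_sectionClass, Cs, Fin.sum_univ_seven, CsBounds]
  omega

lemma csBounds_iff_exists_Ds (hb : ∀ n, b n = 0 ∨ b n = 1) (hsum : ∑ n, b n = 2 * a + 1) :
    CsBounds a b ↔ ∃ j, Ds j 1 = a ∧ ∀ n, Ds j (eIdx n) = -b n := by
  have hb_vec : b = ![b 0, b 1, b 2, b 3, b 4, b 5, b 6] := by
    ext n; fin_cases n <;> rfl
  conv_rhs => rw [hb_vec]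
  rw [Fin.sum_univ_seven] at hsum
  rcases hb 0 with h0 | h0 <;> rcases hb 1 with h1 | h1 <;> rcases hb 2 with h2 | h2 <;>
    rcases hb 3 with h3 | h3 <;> rcases hb 4 with h4 | h4 <;> rcases hb 5 with h5 | h5 <;>
    rcases hb 6 with h6 | h6 <;>
    simp only [CsBounds, h0, h1, h2, h3, h4, h5, h6] at hsum ⊢ <;>
    (obtain ⟨ha0, ha3⟩ : 0 ≤ a ∧ a ≤ 3 := by omega) <;>
    interval_cases a <;> first | omega | decide

end sectionClass

lemma Ds_apply_zero (j : Fin 8) : Ds j 0 = 1 := by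
  revert j; decide

lemma B_Ds_of_ne : ∀ j k : Fin 8, j ≠ k → B (Ds j) (Ds k) = 1 := by
  decide

theorem neg_one_sections_of_case_2a_general (a : ℤ) (b : Fin 7 → ℤ)
    (hb : ∀ n, b n = 0 ∨ b n = 1)
    (hsum : ∑ n : Fin 7, b n = 2 * a + 1) :
    ((∀ i : Fin 8, 0 ≤ B (fun i => Cv i + a * Fv i - ∑ n : Fin 7, b n * Ev n i) (Cs i)) ↔
      ∃ j : Fin 8, (fun i => Cv i + a * Fv i - ∑ n : Fin 7, b n * Ev n i) = Ds j) ∧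
    (∀ j k : Fin 8, j ≠ k → B (Ds j) (Ds k) = 1) := by
  refine ⟨?_, B_Ds_of_ne⟩
  change (∀ i, 0 ≤ B (sectionClass a b) (Cs i)) ↔ ∃ j, sectionClass a b = Ds j
  simp only [nonneg_B_Cs_iff, sectionClass_eq_iff, Ds_apply_zero, true_and]
  exact csBounds_iff_exists_Ds a b hb hsum

/-- The classes `D = C + aF - Σ bₙEₙ` with `a ≥ 0`, `bₙ ∈ {0,1}`, `Σ bₙ = 2a + 1` and
`D·Cᵢ ≥ 0` for the eight classes `C₁, …, C₈` of the case-(2a) configuration are exactly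
the eight classes `D₁, …, D₈` listed above; moreover any two distinct classes among
these eight intersect with intersection number `1`. -/
theorem neg_one_sections_of_case_2a (a : ℤ) (b : Fin 7 → ℤ)
    (ha : 0 ≤ a) (hb : ∀ n, b n = 0 ∨ b n = 1)
    (hsum : ∑ n : Fin 7, b n = 2 * a + 1) :
    ((∀ i : Fin 8, 0 ≤ B (fun i => Cv i + a * Fv i - ∑ n : Fin 7, b n * Ev n i) (Cs i)) ↔
      ∃ j : Fin 8, (fun i => Cv i + a * Fv i - ∑ n : Fin 7, b n * Ev n i) = Ds j) ∧
    (∀ j k : Fin 8, j ≠ k → B (Ds j) (Ds k) = 1) :=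
  neg_one_sections_of_case_2a_general a b hb hsum
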